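/- If the set of constraint nodes merged in forming G' from G induces (together with their direct variable-node neighbors) a cycle-free subgraph of G, then the fundamental polytopes are equal: Q(C) = Q'(C). -/

import Mathlib

/-- Membership of a real vector `c` in the local LP polytope of the constituent
code `C` on the index set `S`. -/
def inLocal {N : ℕ} (S : Finset (Fin N)) (C : Set (Fin N → Bool)) (c : Fin N → ℝ) : Prop :=
  ∃ w : (Fin N → Bool) → ℝ,
    (∀ g, 0 ≤ w g) ∧ (∀ g, g ∉ C → w g = 0) ∧ (∑ g, w g) = 1 ∧
    ∀ i ∈ S, c i = ∑ g, (if g i = true then w g else 0)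

/-- The (bipartite) Tanner graph on constraint nodes `J` and variable nodes `Fin N`,
with an edge between `j` and `i` iff `i ∈ Nbr j`. -/
def tannerGraph {N : ℕ} {J : Type} (Nbr : J → Finset (Fin N)) :
    SimpleGraph (J ⊕ Fin N) :=
  SimpleGraph.fromRel (fun a b => ∃ j i, a = Sum.inl j ∧ b = Sum.inr i ∧ i ∈ Nbr j)

/-! Merging only intersects the codes of a group, so the local polytope of the merged code is
contained in those of its members. Conversely, build the group up one constraint at a time,
always adding a leaf: acyclicity of the group's Tanner subgraph guarantees a constraint that
shares at most one variable with the others. Two local distributions with the same marginal on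
that variable are coupled by conditioning on it, and the coupled pair of words glues into a word
of the intersected code with the required marginals. -/

open Finset SimpleGraph

namespace SimpleGraph

variable {V : Type*} {G : SimpleGraph V}

theorem IsAcyclic.exists_neighborSet_subsingleton [Finite V] [Nonempty V] (hG : G.IsAcyclic) :
    ∃ u, (G.neighborSet u).Subsingleton := by
  obtain ⟨u, v, p, hp, hmax⟩ := Walk.exists_isPath_forall_isPath_length_le_length G
  -- a neighbour of `u` off the longest path `p` would extend it
  have hsnd : ∀ w, G.Adj u w → w = p.snd := fun w hw =>
    hG.eq_snd_of_adj_start hp hw <| by_contra fun hw' => by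
      have := hmax _ _ _ (hp.cons hw' (h := hw.symm))
      simp at this
  exact ⟨u, fun a ha b hb => (hsnd a ha).trans (hsnd b hb).symm⟩

theorem not_isAcyclic_induce_of_two_adj [Finite V] {S : Set V} (hS : S.Nonempty)
    (h : ∀ v ∈ S, ∃ a ∈ S, ∃ b ∈ S, a ≠ b ∧ G.Adj v a ∧ G.Adj v b) :
    ¬ (G.induce S).IsAcyclic := by
  intro hG
  have : Nonempty S := hS.to_subtype
  obtain ⟨⟨u, hu⟩, hsub⟩ := hG.exists_neighborSet_subsingleton
  obtain ⟨a, ha, b, hb, hab, hua, hub⟩ := h u hu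
  exact hab (congrArg Subtype.val (@hsub ⟨a, ha⟩ hua ⟨b, hb⟩ hub))

theorem IsAcyclic.induce_of_subset {S K : Set V} (hK : (G.induce K).IsAcyclic) (hSK : S ⊆ K) :
    (G.induce S).IsAcyclic :=
  hK.embedding (G.induceHomOfLE hSK)

end SimpleGraph

theorem exists_coupling_of_fiber_sum_eq {α β γ : Type*} [Fintype α] [Fintype β] [DecidableEq γ]
    {w : α → ℝ} {v : β → ℝ} (hw : ∀ a, 0 ≤ w a) (hv : ∀ b, 0 ≤ v b) {p : α → γ} {q : β → γ}
    (hpq : ∀ x, ∑ a with p a = x, w a = ∑ b with q b = x, v b) :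
    ∃ κ : α → β → ℝ, (∀ a b, 0 ≤ κ a b) ∧ (∀ a, ∑ b, κ a b = w a) ∧ (∀ b, ∑ a, κ a b = v b) ∧
      ∀ a b, κ a b ≠ 0 → p a = q b := by
  set M : γ → ℝ := fun x => ∑ a with p a = x, w a
  have hwM : ∀ a, w a ≤ M (p a) := fun a =>
    single_le_sum (fun a _ => hw a) (mem_filter.2 ⟨mem_univ a, rfl⟩)
  have hvM : ∀ b, v b ≤ M (q b) := fun b => by
    show v b ≤ ∑ a with p a = q b, w a
    rw [hpq]
    exact single_le_sum (fun b _ => hv b) (mem_filter.2 ⟨mem_univ b, rfl⟩)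
  refine ⟨fun a b => if p a = q b then w a * v b / M (p a) else 0, fun a b => ?_, fun a => ?_,
    fun b => ?_, fun a b hab => of_not_not fun hne => hab (if_neg hne)⟩
  · have hM : 0 ≤ M (p a) := sum_nonneg fun a _ => hw a
    dsimp only
    split_ifs
    exacts [div_nonneg (mul_nonneg (hw a) (hv b)) hM, le_rfl]
  · calc ∑ b, (if p a = q b then w a * v b / M (p a) else 0)
        = w a / M (p a) * ∑ b with q b = p a, v b := by
          rw [sum_filter, mul_sum]
          refine sum_congr rfl fun b _ => ?_
          simp only [eq_comm (a := p a)]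
          split_ifs <;> ring
      _ = w a := by
          rw [← hpq]
          exact div_mul_cancel_of_imp fun h0 => le_antisymm (h0 ▸ hwM a) (hw a)
  · calc ∑ a, (if p a = q b then w a * v b / M (p a) else 0)
        = v b / M (q b) * ∑ a with p a = q b, w a := by
          rw [sum_filter, mul_sum]
          refine sum_congr rfl fun a _ => ?_
          split_ifs with h
          · rw [h]; ring
          · ring
      _ = v b := div_mul_cancel_of_imp fun h0 => le_antisymm (h0 ▸ hvM b) (hv b)

section LocalPolytope

variable {N : ℕ} {S S₁ S₂ : Finset (Fin N)} {C C₁ C₂ : Set (Fin N → Bool)} {c : Fin N → ℝ}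

theorem inLocal.mono {S' : Finset (Fin N)} {C' : Set (Fin N → Bool)} (h : inLocal S C c)
    (hS : S' ⊆ S) (hC : C ⊆ C') : inLocal S' C' c := by
  obtain ⟨w, hw0, hwC, hw1, hwc⟩ := h
  exact ⟨w, hw0, fun g hg => hwC g fun h => hg (hC h), hw1, fun i hi => hwc i (hS hi)⟩

theorem inLocal_of_map {α : Type*} [Fintype α] (u : α → ℝ) (φ : α → Fin N → Bool)
    (hu : ∀ a, 0 ≤ u a) (hC : ∀ a, u a ≠ 0 → φ a ∈ C) (h1 : ∑ a, u a = 1)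
    (hc : ∀ i ∈ S, c i = ∑ a, if φ a i = true then u a else 0) : inLocal S C c := by
  classical
  refine ⟨fun g => ∑ a with φ a = g, u a, fun g => sum_nonneg fun a _ => hu a, fun g hg => ?_,
    (sum_fiberwise univ φ u).trans h1, fun i hi => ?_⟩
  · exact sum_eq_zero fun a ha => of_not_not fun hne => hg ((mem_filter.1 ha).2 ▸ hC a hne)
  · rw [hc i hi, ← sum_fiberwise univ φ]
    refine sum_congr rfl fun g _ => ?_
    rw [ite_sum_zero]
    exact sum_congr rfl fun a ha => by rw [(mem_filter.1 ha).2]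

theorem inLocal_empty {g : Fin N → Bool} (hg : g ∈ C) (c : Fin N → ℝ) : inLocal ∅ C c :=
  inLocal_of_map (α := Unit) (fun _ => 1) (fun _ => g) (fun _ => zero_le_one) (fun _ _ => hg)
    (by simp) (by simp)

theorem sum_fiber_restrict_eq_of_card_le_one (hS : #S ≤ 1) {w v : (Fin N → Bool) → ℝ}
    (h1 : ∑ g, w g = ∑ g, v g)
    (hm : ∀ i ∈ S, ∑ g, (if g i = true then w g else 0) = ∑ g, if g i = true then v g else 0)
    (x : S → Bool) :
    ∑ g with (fun i : S => g i) = x, w g = ∑ g with (fun i : S => g i) = x, v g := by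
  rcases S.eq_empty_or_nonempty with rfl | ⟨i, hi⟩
  · have hx : ∀ g : Fin N → Bool, (fun i : (∅ : Finset (Fin N)) => g i) = x :=
      fun g => funext fun k => absurd k.2 (notMem_empty _)
    simpa [hx] using h1
  obtain rfl : S = {i} := eq_singleton_iff_unique_mem.2 ⟨hi, fun k hk => card_le_one.1 hS k hk i hi⟩
  have hfiber : ∀ g : Fin N → Bool, (fun k : ({i} : Finset (Fin N)) => g k) = x ↔ g i = x ⟨i, hi⟩ :=
    fun g => ⟨fun h => congrFun h ⟨i, hi⟩, fun h => funext fun ⟨k, hk⟩ => by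
      obtain rfl := mem_singleton.1 hk; exact h⟩
  simp only [hfiber]
  have htrue := hm i hi
  rw [← sum_filter, ← sum_filter] at htrue
  cases x ⟨i, hi⟩
  · have hw := sum_filter_add_sum_filter_not univ (fun g : Fin N → Bool => g i = true) w
    have hv := sum_filter_add_sum_filter_not univ (fun g : Fin N → Bool => g i = true) v
    simp only [Bool.not_eq_true] at hw hv
    linarith
  · exact htrue

theorem inLocal_union_of_card_inter_le_one
    (h₁ : DependsOn (· ∈ C₁) (S₁ : Set (Fin N))) (h₂ : DependsOn (· ∈ C₂) (S₂ : Set (Fin N)))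
    (hS : #(S₁ ∩ S₂) ≤ 1) (hc₁ : inLocal S₁ C₁ c) (hc₂ : inLocal S₂ C₂ c) :
    inLocal (S₁ ∪ S₂) (C₁ ∩ C₂) c := by
  obtain ⟨w, hw0, hwC, hw1, hwc⟩ := hc₁
  obtain ⟨v, hv0, hvC, hv1, hvc⟩ := hc₂
  obtain ⟨κ, hκ0, hκw, hκv, hκagree⟩ := exists_coupling_of_fiber_sum_eq hw0 hv0
    (sum_fiber_restrict_eq_of_card_le_one hS (hw1.trans hv1.symm) fun i hi => by
      rw [← hwc i (mem_inter.1 hi).1, ← hvc i (mem_inter.1 hi).2])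
  have hκC : ∀ g h, κ g h ≠ 0 → g ∈ C₁ ∧ h ∈ C₂ := fun g h hgh => by
    refine ⟨by_contra fun hg => hgh ?_, by_contra fun hh => hgh ?_⟩
    · exact (sum_eq_zero_iff_of_nonneg fun h _ => hκ0 g h).1 ((hκw g).trans (hwC g hg)) h
        (mem_univ h)
    · exact (sum_eq_zero_iff_of_nonneg fun g _ => hκ0 g h).1 ((hκv h).trans (hvC h hh)) g
        (mem_univ g)
  refine inLocal_of_map (fun gh : _ × _ => κ gh.1 gh.2) (fun gh => S₂.piecewise gh.2 gh.1)
    (fun gh => hκ0 _ _) (fun ⟨g, h⟩ hgh => ⟨?_, ?_⟩) ?_ fun i hi => ?_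
  · refine cast (h₁ (x := g) (y := S₂.piecewise h g) fun i hi => ?_) (hκC g h hgh).1
    by_cases hi₂ : i ∈ S₂
    · rw [piecewise_eq_of_mem _ _ _ hi₂]
      exact congrFun (hκagree g h hgh) ⟨i, mem_inter.2 ⟨hi, hi₂⟩⟩
    · rw [piecewise_eq_of_notMem _ _ _ hi₂]
  · exact cast (h₂ (x := h) (y := S₂.piecewise h g) fun i hi => (piecewise_eq_of_mem _ _ _ hi).symm)
      (hκC g h hgh).2
  · simp only [Fintype.sum_prod_type, hκw, hw1]
  · rw [Fintype.sum_prod_type]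
    by_cases hi₂ : i ∈ S₂
    · simp only [piecewise_eq_of_mem _ _ _ hi₂]
      rw [sum_comm, hvc i hi₂]
      exact sum_congr rfl fun h _ => by rw [← ite_sum_zero, hκv]
    · simp only [piecewise_eq_of_notMem _ _ _ hi₂]
      rw [hwc i ((mem_union.1 hi).resolve_right hi₂)]
      exact sum_congr rfl fun g _ => by rw [← ite_sum_zero, hκw]

end LocalPolytope

section Tanner

variable {N : ℕ} {J : Type} {Nbr : J → Finset (Fin N)}

theorem tannerGraph_adj_inl_inr {j : J} {i : Fin N} :
    (tannerGraph Nbr).Adj (Sum.inl j) (Sum.inr i) ↔ i ∈ Nbr j := by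
  simp [tannerGraph]

theorem dependsOn_mem_biInter {C : J → Set (Fin N → Bool)} {T : Finset J}
    (hC : ∀ j ∈ T, DependsOn (· ∈ C j) (Nbr j : Set (Fin N))) :
    DependsOn (· ∈ {g | ∀ j ∈ T, g ∈ C j}) (T.biUnion Nbr : Set (Fin N)) := fun _ _ hxy =>
  propext <| forall₂_congr fun j hj =>
    (hC j hj fun i hi => hxy i (mem_biUnion.2 ⟨j, hj, hi⟩)).to_iff

variable [Finite J] [DecidableEq J] {K : Set (J ⊕ Fin N)}

theorem exists_card_inter_biUnion_erase_le_one (hK : ((tannerGraph Nbr).induce K).IsAcyclic)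
    {T : Finset J} (hTK : ∀ j ∈ T, Sum.inl j ∈ K ∧ ∀ i ∈ Nbr j, Sum.inr i ∈ K)
    (hT : T.Nonempty) : ∃ j ∈ T, #(Nbr j ∩ (T.erase j).biUnion Nbr) ≤ 1 := by
  by_contra! hshared
  -- every constraint node of `T` and every variable node shared by two of them has two
  -- neighbours among these nodes
  set shared : Set (Fin N) := {i | ∃ j ∈ T, i ∈ Nbr j ∩ (T.erase j).biUnion Nbr}
  refine not_isAcyclic_induce_of_two_adj (S := Sum.inl '' ↑T ∪ Sum.inr '' shared) ?_ ?_
    (hK.induce_of_subset ?_)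
  · obtain ⟨j, hj⟩ := hT
    exact ⟨Sum.inl j, Or.inl ⟨j, hj, rfl⟩⟩
  · rintro _ (⟨j, hj, rfl⟩ | ⟨i, ⟨j, hj, hi⟩, rfl⟩)
    · obtain ⟨i₁, hi₁, i₂, hi₂, hne⟩ := one_lt_card.1 (hshared j hj)
      exact ⟨Sum.inr i₁, Or.inr ⟨i₁, ⟨j, hj, hi₁⟩, rfl⟩, Sum.inr i₂, Or.inr ⟨i₂, ⟨j, hj, hi₂⟩, rfl⟩,
        Sum.inr_injective.ne hne, tannerGraph_adj_inl_inr.2 (mem_inter.1 hi₁).1,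
        tannerGraph_adj_inl_inr.2 (mem_inter.1 hi₂).1⟩
    · obtain ⟨hij, hik⟩ := mem_inter.1 hi
      obtain ⟨k, hk, hik⟩ := mem_biUnion.1 hik
      obtain ⟨hkj, hkT⟩ := mem_erase.1 hk
      exact ⟨Sum.inl j, Or.inl ⟨j, hj, rfl⟩, Sum.inl k, Or.inl ⟨k, hkT, rfl⟩,
        Sum.inl_injective.ne hkj.symm, (tannerGraph_adj_inl_inr.2 hij).symm,
        (tannerGraph_adj_inl_inr.2 hik).symm⟩
  · rintro _ (⟨j, hj, rfl⟩ | ⟨i, ⟨j, hj, hi⟩, rfl⟩)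
    · exact (hTK j hj).1
    · exact (hTK j hj).2 i (mem_inter.1 hi).1

theorem inLocal_biUnion {C : J → Set (Fin N → Bool)} {c : Fin N → ℝ}
    (hC : ∀ j, DependsOn (· ∈ C j) (Nbr j : Set (Fin N)))
    (hK : ((tannerGraph Nbr).induce K).IsAcyclic) (hc : ∀ j, inLocal (Nbr j) (C j) c)
    (T : Finset J) (hTK : ∀ j ∈ T, Sum.inl j ∈ K ∧ ∀ i ∈ Nbr j, Sum.inr i ∈ K) :
    inLocal (T.biUnion Nbr) {g | ∀ j ∈ T, g ∈ C j} c := by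
  induction T using Finset.strongInduction with | H T ih =>
  rcases T.eq_empty_or_nonempty with rfl | hT
  · simpa using inLocal_empty (C := Set.univ) (Set.mem_univ fun _ => false) c
  obtain ⟨j, hj, hleaf⟩ := exists_card_inter_biUnion_erase_le_one hK hTK hT
  have hrest := ih (T.erase j) (erase_ssubset hj) fun k hk => hTK k (mem_of_mem_erase hk)
  rw [← insert_erase hj, biUnion_insert]
  simp only [forall_mem_insert, Set.ofPred_and, Set.ofPred_mem_eq]
  exact inLocal_union_of_card_inter_le_one (hC j) (dependsOn_mem_biInter fun k _ => hC k) hleaf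
    (hc j) hrest

end Tanner

theorem merged_polytope_eq_of_acyclic_general
    {N : ℕ} {J J' : Type} [Fintype J] [DecidableEq J']
    (Nbr : J → Finset (Fin N)) (C : J → Set (Fin N → Bool))
    (hrestr : ∀ j, ∀ g g' : Fin N → Bool,
      (∀ i ∈ Nbr j, g i = g' i) → g ∈ C j → g' ∈ C j)
    (m : J → J')
    (hacyclic : ∀ j' : J',
      ((tannerGraph Nbr).induce
        {x | ∃ j, m j = j' ∧ (x = Sum.inl j ∨ ∃ i ∈ Nbr j, x = Sum.inr i)}).IsAcyclic)
    (c : Fin N → ℝ) :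
    (∀ j, inLocal (Nbr j) (C j) c) ↔
      (∀ j' : J',
        inLocal (Finset.univ.biUnion fun j => if m j = j' then Nbr j else ∅)
          {g | ∀ j, m j = j' → g ∈ C j} c) := by
  classical
  have hC : ∀ j, DependsOn (· ∈ C j) (Nbr j : Set (Fin N)) := fun j g g' hgg' =>
    propext ⟨hrestr j g g' hgg', hrestr j g' g fun i hi => (hgg' i hi).symm⟩
  refine ⟨fun hc j' => ?_, fun hc j => (hc (m j)).mono (fun i hi => ?_) fun g hg => hg j rfl⟩
  · have hgroup := inLocal_biUnion hC (hacyclic j') hc {j | m j = j'} fun j hj =>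
      have hj : m j = j' := (mem_filter.1 hj).2
      ⟨⟨j, hj, Or.inl rfl⟩, fun i hi => ⟨j, hj, Or.inr ⟨i, hi, rfl⟩⟩⟩
    convert hgroup using 1
    · ext i
      simp only [mem_biUnion, mem_univ, true_and, mem_filter]
      exact exists_congr fun j => by split_ifs <;> simp [*]
    · ext g
      simp
  · exact mem_biUnion.2 ⟨j, mem_univ j, (if_pos rfl).symm ▸ hi⟩

/-- if each group of merged constraint nodes, together with their direct
variable-node neighbors, induces a cycle-free subgraph of the Tanner graph `G`
(and each constituent code depends only on the coordinates of its neighborhood),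
then merging does not change the fundamental polytope: `Q(C) = Q'(C)`. -/
theorem merged_polytope_eq_of_acyclic
    {N : ℕ} {J J' : Type} [Fintype J] [DecidableEq J']
    (Nbr : J → Finset (Fin N)) (C : J → Set (Fin N → Bool))
    (hrestr : ∀ j, ∀ g g' : Fin N → Bool,
      (∀ i ∈ Nbr j, g i = g' i) → g ∈ C j → g' ∈ C j)
    (m : J → J')
    (hacyclic : ∀ j' : J',
      ((tannerGraph Nbr).induce
        {x | ∃ j, m j = j' ∧ (x = Sum.inl j ∨ ∃ i ∈ Nbr j, x = Sum.inr i)}).IsAcyclic)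
    (c : Fin N → ℝ) (hbox : ∀ i, 0 ≤ c i ∧ c i ≤ 1) :
    (∀ j, inLocal (Nbr j) (C j) c) ↔
      (∀ j' : J',
        inLocal (Finset.univ.biUnion fun j => if m j = j' then Nbr j else ∅)
          {g | ∀ j, m j = j' → g ∈ C j} c) :=
  merged_polytope_eq_of_acyclic_general Nbr C hrestr m hacyclic c
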